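/- Let w = ℓ₁ℓ₂⋯ℓₙ be the nonincreasing factorization of a nonempty finite word w into Lyndon words, i.e., each ℓᵢ is a Lyndon word and ℓ₁ ≥ ℓ₂ ≥ ⋯ ≥ ℓₙ lexicographically. Then ℓ₁ is the shortest nonempty prefix p of w with the following property: writing w = ps, either s is empty or p^ω ≥ s^ω. That is, ℓ₁ has this property, and every nonempty proper prefix p of w shorter than ℓ₁, with w = ps, satisfies s nonempty and p^ω < s^ω. -/

import Mathlib

variable {A : Type*} [LinearOrder A] [Inhabited A]

/-- The infinite periodic word `u^ω = uuu⋯`, as a function `ℕ → A`. -/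
def omegaPow (u : List A) : ℕ → A := fun n => u.getD (n % u.length) default

/-- Lexicographic order on infinite words: `s < t` iff at the first position where
they differ, `s` has the smaller letter. -/
def lexLt (s t : ℕ → A) : Prop := ∃ k, (∀ i < k, s i = t i) ∧ s k < t k

/-- Non-strict lexicographic order on infinite words. -/
def lexLe (s t : ℕ → A) : Prop := lexLt s t ∨ s = t

/-- A nonempty word `w` is a Lyndon word: `w` is lexicographically smaller than
each of its nonempty proper suffixes. -/
def IsLyndon (w : List A) : Prop :=
  w ≠ [] ∧ ∀ v, v <:+ w → v ≠ [] → v ≠ w → List.Lex (· < ·) w v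


set_option linter.unusedSectionVars false
set_option maxHeartbeats 1000000

namespace LyndonAux

/-- Truncated lexicographic comparison of infinite words up to position `n`. -/
def leUpTo (s t : ℕ → A) (n : ℕ) : Prop :=
  (∀ i < n, s i = t i) ∨ ∃ j, j < n ∧ (∀ i < j, s i = t i) ∧ s j < t j

lemma leUpTo_mono {s t : ℕ → A} {m n : ℕ} (h : m ≤ n) (H : leUpTo s t n) : leUpTo s t m := by
  rcases H with H | ⟨j, hj, ha, hs⟩
  · exact Or.inl fun i hi => H i (lt_of_lt_of_le hi h)
  · by_cases hjm : j < m
    · exact Or.inr ⟨j, hjm, ha, hs⟩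
    · exact Or.inl fun i hi => ha i (lt_of_lt_of_le hi (not_lt.1 hjm))

lemma leUpTo_congr {s s' t t' : ℕ → A} {n : ℕ} (hs : ∀ i, s i = s' i) (ht : ∀ i, t i = t' i)
    (H : leUpTo s t n) : leUpTo s' t' n := by
  rcases H with H | ⟨j, hj, ha, hlt⟩
  · exact Or.inl fun i hi => (hs i).symm.trans ((H i hi).trans (ht i))
  · exact Or.inr ⟨j, hj, fun i hi => (hs i).symm.trans ((ha i hi).trans (ht i)),
      (hs j) ▸ (ht j) ▸ hlt⟩

lemma leUpTo_trans {s t u : ℕ → A} {n : ℕ} (h1 : leUpTo s t n) (h2 : leUpTo t u n) :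
    leUpTo s u n := by
  rcases h1 with H1 | ⟨j1, hj1, ha1, hs1⟩
  · rcases h2 with H2 | ⟨j2, hj2, ha2, hs2⟩
    · exact Or.inl fun i hi => (H1 i hi).trans (H2 i hi)
    · exact Or.inr ⟨j2, hj2, fun i hi => (H1 i (hi.trans hj2)).trans (ha2 i hi),
        lt_of_le_of_lt (le_of_eq (H1 j2 hj2)) hs2⟩
  · rcases h2 with H2 | ⟨j2, hj2, ha2, hs2⟩
    · exact Or.inr ⟨j1, hj1, fun i hi => (ha1 i hi).trans (H2 i (hi.trans hj1)),
        lt_of_lt_of_le hs1 (le_of_eq (H2 j1 hj1))⟩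
    · rcases lt_trichotomy j1 j2 with h | h | h
      · exact Or.inr ⟨j1, hj1, fun i hi => (ha1 i hi).trans (ha2 i (hi.trans h)),
          lt_of_lt_of_le hs1 (le_of_eq (ha2 j1 h))⟩
      · subst h
        exact Or.inr ⟨j1, hj1, fun i hi => (ha1 i hi).trans (ha2 i hi), hs1.trans hs2⟩
      · exact Or.inr ⟨j2, hj2, fun i hi => (ha1 i (hi.trans h)).trans (ha2 i hi),
          lt_of_le_of_lt (le_of_eq (ha1 j2 h)) hs2⟩

lemma leUpTo_glue {s t : ℕ → A} {q m : ℕ}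
    (h0 : ∀ i < q, s i = t i)
    (h1 : leUpTo (fun i => s (q + i)) (fun i => t (q + i)) m) :
    leUpTo s t (q + m) := by
  rcases h1 with H | ⟨j, hj, ha, hs⟩
  · left
    intro i hi
    by_cases h : i < q
    · exact h0 i h
    · have hi' : i = q + (i - q) := by omega
      rw [hi']; exact H _ (by omega)
  · right
    refine ⟨q + j, by omega, ?_, hs⟩
    intro i hi
    by_cases h : i < q
    · exact h0 i h
    · have hi' : i = q + (i - q) := by omega
      rw [hi']; exact ha _ (by omega)

lemma leUpTo_of_firstdiff {s t : ℕ → A} {j : ℕ} (ha : ∀ i < j, s i = t i) (hs : s j < t j)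
    (n : ℕ) : leUpTo s t n := by
  by_cases h : j < n
  · exact Or.inr ⟨j, h, ha, hs⟩
  · exact Or.inl fun i hi => ha i (by omega)

lemma lexLe_iff {s t : ℕ → A} : lexLe s t ↔ ∀ n, leUpTo s t n := by
  constructor
  · rintro (⟨k, ha, hs⟩ | rfl)
    · exact leUpTo_of_firstdiff ha hs
    · exact fun n => Or.inl fun i _ => rfl
  · intro h
    by_cases heq : s = t
    · exact Or.inr heq
    · classical
      have hex : ∃ k, s k ≠ t k := by
        by_contra hc
        push_neg at hc
        exact heq (funext hc)
      left
      set k := Nat.find hex with hk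
      have hspec : s k ≠ t k := Nat.find_spec hex
      have hmin : ∀ i < k, s i = t i := fun i hi => by
        by_contra hne
        have h2 : Nat.find hex ≤ i := Nat.find_le hne
        omega
      rcases h (k + 1) with H | ⟨j, hj, ha, hs⟩
      · exact absurd (H k (Nat.lt_succ_self k)) hspec
      · have hjk : j = k := by
          rcases lt_or_ge j k with h' | h'
          · exact absurd (hmin j h') (ne_of_lt hs)
          · omega
        exact ⟨k, hmin, hjk ▸ hs⟩


/-- Characterization of strict lexicographic order on finite words. -/
lemma lex_iff : ∀ (a b : List A), List.Lex (·<·) a b ↔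
    ((a <+: b) ∧ a ≠ b) ∨
    ∃ j, j < a.length ∧ j < b.length ∧ (∀ i < j, a.getD i default = b.getD i default) ∧
      a.getD j default < b.getD j default := by
  intro a
  induction a with
  | nil =>
    intro b
    cases b with
    | nil =>
      constructor
      · intro h; exact absurd h (by intro h; cases h)
      · rintro (⟨-, h⟩ | ⟨j, hj, -⟩)
        · exact absurd rfl h
        · exact absurd hj (by simp)
    | cons y ys =>
      constructor
      · intro _; exact Or.inl ⟨List.nil_prefix, by simp⟩
      · intro _; exact List.Lex.nil
  | cons x xs ih =>
    intro b
    cases b with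
    | nil =>
      constructor
      · intro h; exact absurd h (by intro h; cases h)
      · rintro (⟨h, -⟩ | ⟨j, -, hj, -⟩)
        · exact absurd (List.eq_nil_of_prefix_nil h) (by simp)
        · exact absurd hj (by simp)
    | cons y ys =>
      constructor
      · intro h
        cases h with
        | rel hxy =>
          exact Or.inr ⟨0, by simp, by simp, by simp, by simpa using hxy⟩
        | cons h' =>
          rcases (ih ys).1 h' with ⟨hpre, hne⟩ | ⟨j, h1, h2, ag, lt⟩
          · exact Or.inl ⟨List.cons_prefix_cons.2 ⟨rfl, hpre⟩, by simpa using hne⟩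
          · refine Or.inr ⟨j + 1, by simpa using h1, by simpa using h2, ?_, by simpa using lt⟩
            intro i hi
            cases i with
            | zero => simp
            | succ i => simpa using ag i (by omega)
      · rintro (⟨hpre, hne⟩ | ⟨j, h1, h2, ag, lt⟩)
        · rcases List.cons_prefix_cons.1 hpre with ⟨rfl, hpre'⟩
          exact List.Lex.cons ((ih ys).2 (Or.inl ⟨hpre', by simpa using hne⟩))
        · cases j with
          | zero => exact List.Lex.rel (by simpa using lt)
          | succ j =>
            have hxy : x = y := by simpa using ag 0 (by omega)
            subst hxy
            refine List.Lex.cons ((ih ys).2 (Or.inr ⟨j, by simpa using h1, by simpa using h2,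
              ?_, by simpa using lt⟩))
            intro i hi
            simpa using ag (i + 1) (by omega)


/-! ### omegaPow basics -/

lemma omega_lt {u : List A} {n : ℕ} (h : n < u.length) : omegaPow u n = u.getD n default := by
  simp [omegaPow, Nat.mod_eq_of_lt h]

lemma omega_period (u : List A) (i : ℕ) : omegaPow u (u.length + i) = omegaPow u i := by
  simp [omegaPow, Nat.add_mod_left]

/-- F2: a Lyndon word's power word is ≤ all of its shifts. -/
lemma shift_omega (l : List A) (hl : IsLyndon l) (q n : ℕ) :
    leUpTo (omegaPow l) (fun i => omegaPow l (q + i)) n := by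
  have hl0 : 0 < l.length := List.length_pos_iff.2 hl.1
  set r := q % l.length with hr
  have hrL : r < l.length := Nat.mod_lt _ hl0
  have hkey : ∀ i, omegaPow l (q + i) = omegaPow l (r + i) := by
    intro i
    simp only [omegaPow]
    congr 1
    conv_lhs => rw [Nat.add_mod]
    conv_rhs => rw [Nat.add_mod]
    rw [← hr, Nat.mod_mod_of_dvd _ dvd_rfl]
  by_cases hr0 : r = 0
  · left
    intro i _
    show omegaPow l i = omegaPow l (q + i)
    rw [hkey, hr0, Nat.zero_add]
  · have hr0' : 0 < r := Nat.pos_of_ne_zero hr0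
    set v := l.drop r with hv
    have hvlen : v.length = l.length - r := List.length_drop
    have hvne : v ≠ [] := by
      intro h
      rw [h] at hvlen
      simp at hvlen
      omega
    have hvnel : v ≠ l := by
      intro h
      rw [h] at hvlen
      omega
    have hlex := hl.2 v (List.drop_suffix r l) hvne hvnel
    rcases (lex_iff l v).1 hlex with ⟨hpre, _⟩ | ⟨j, hj1, hj2, ag, lt⟩
    · have := hpre.length_le
      omega
    · have hvget : ∀ i (h : i < v.length), v.getD i default = l.getD (r + i) default := by
        intro i h
        rw [List.getD_eq_getElem _ _ h, List.getD_eq_getElem _ _ (by omega : r + i < l.length)]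
        exact List.getElem_drop
      apply leUpTo_of_firstdiff (j := j)
      · intro i hi
        show omegaPow l i = omegaPow l (q + i)
        rw [hkey, omega_lt (by omega : i < l.length),
          omega_lt (by omega : r + i < l.length), ← hvget i (by omega)]
        exact ag i hi
      · show omegaPow l j < omegaPow l (q + j)
        rw [hkey, omega_lt (by omega : j < l.length),
          omega_lt (by omega : r + j < l.length), ← hvget j (by omega)]
        exact lt

/-! ### prepending finite words to infinite words -/

def prepend (x : List A) (t : ℕ → A) : ℕ → A :=
  fun n => if n < x.length then x.getD n default else t (n - x.length)

lemma prepend_lt {x : List A} {t : ℕ → A} {n : ℕ} (h : n < x.length) :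
    prepend x t n = x.getD n default := if_pos h

lemma prepend_add (x : List A) (t : ℕ → A) (n : ℕ) : prepend x t (x.length + n) = t n := by
  simp [prepend]

lemma prepend_append (x y : List A) (t : ℕ → A) :
    prepend (x ++ y) t = prepend x (prepend y t) := by
  funext n
  simp only [prepend, List.length_append]
  by_cases h1 : n < x.length
  · rw [if_pos (by omega), if_pos h1, List.getD_append _ _ _ _ h1]
  · by_cases h2 : n < x.length + y.length
    · rw [if_pos h2, if_neg h1, if_pos (by omega), List.getD_append_right _ _ _ _ (by omega)]
    · rw [if_neg h2, if_neg h1, if_neg (by omega)]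
      congr 1
      omega

lemma prepend_omega_self (s : List A) : prepend s (omegaPow s) = omegaPow s := by
  funext n
  by_cases h : n < s.length
  · rw [prepend_lt h, omega_lt h]
  · have hn : n = s.length + (n - s.length) := by omega
    conv_rhs => rw [hn, omega_period]
    rw [show prepend s (omegaPow s) n = omegaPow s (n - s.length) from if_neg h]

/-- Step lemma: prepending a word `u ≤ l` preserves domination by `l^ω`. -/
lemma step (l u : List A) (hl : IsLyndon l)
    (hle : List.Lex (·<·) u l ∨ u = l) (t : ℕ → A) (m : ℕ)
    (ht : leUpTo t (omegaPow l) m) :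
    leUpTo (prepend u t) (omegaPow l) (u.length + m) := by
  have hpre_case : u <+: l → leUpTo (prepend u t) (omegaPow l) (u.length + m) := by
    intro hpre
    apply leUpTo_glue
    · intro i hi
      rw [prepend_lt hi, omega_lt (by have := hpre.length_le; omega),
        List.getD_eq_getElem _ _ hi, List.getD_eq_getElem _ _ (by have := hpre.length_le; omega)]
      exact hpre.getElem hi
    · have h2 : leUpTo t (fun i => omegaPow l (u.length + i)) m :=
        leUpTo_trans ht (shift_omega l hl u.length m)
      exact leUpTo_congr (fun i => (prepend_add u t i).symm) (fun i => rfl) h2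
  rcases hle with hlex | rfl
  · rcases (lex_iff u l).1 hlex with ⟨hpre, _⟩ | ⟨j, hj1, hj2, ag, lt⟩
    · exact hpre_case hpre
    · apply leUpTo_of_firstdiff (j := j)
      · intro i hi
        rw [prepend_lt (by omega), omega_lt (by omega)]
        exact ag i hi
      · rw [prepend_lt hj1, omega_lt hj2]
        exact lt
  · exact hpre_case (List.prefix_refl u)

/-- Key lemma: a concatenation of words each `≤ l` is dominated by `l^ω`. -/
lemma key (l : List A) (hl : IsLyndon l) (M : List (List A))
    (hmem : ∀ u ∈ M, List.Lex (·<·) u l ∨ u = l) (t : ℕ → A) :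
    leUpTo (M.foldr prepend t) (omegaPow l) M.flatten.length := by
  induction M with
  | nil => exact Or.inl (by intro i hi; simp at hi)
  | cons u M ih =>
    have hlen : (u :: M).flatten.length = u.length + M.flatten.length := by
      simp [List.flatten_cons]
    rw [hlen, List.foldr_cons]
    exact step l u hl (hmem u (List.mem_cons_self)) _ _
      (ih (fun v hv => hmem v (List.mem_cons_of_mem _ hv)))

lemma foldr_prepend (T : List (List A)) (t : ℕ → A) :
    T.foldr prepend t = prepend T.flatten t := by
  induction T with
  | nil =>
    funext n
    simp [prepend]
  | cons u T ih =>
    rw [List.foldr_cons, ih, List.flatten_cons, prepend_append]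

lemma foldr_replicate (T : List (List A)) (n : ℕ) :
    (List.replicate n T).flatten.foldr prepend (omegaPow T.flatten) = omegaPow T.flatten := by
  induction n with
  | zero => simp
  | succ n ih =>
    rw [List.replicate_succ, List.flatten_cons, List.foldr_append, ih, foldr_prepend,
      prepend_omega_self]

lemma length_replicate_flatten (T : List (List A)) (n : ℕ) :
    (List.replicate n T).flatten.flatten.length = n * T.flatten.length := by
  induction n with
  | zero => simp
  | succ n ih =>
    rw [List.replicate_succ, List.flatten_cons, List.flatten_append, List.length_append, ih]
    ring

/-- Part 1 main lemma. -/
lemma part1 (l : List A) (hl : IsLyndon l) (T : List (List A))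
    (hmem : ∀ u ∈ T, List.Lex (·<·) u l ∨ u = l) (hTne : T.flatten ≠ []) :
    lexLe (omegaPow T.flatten) (omegaPow l) := by
  rw [lexLe_iff]
  intro n
  have hlen : 0 < T.flatten.length := List.length_pos_iff.2 hTne
  have hmem' : ∀ u ∈ (List.replicate n T).flatten, List.Lex (·<·) u l ∨ u = l := by
    intro u hu
    rcases List.mem_flatten.1 hu with ⟨s, hs, hus⟩
    rw [List.eq_of_mem_replicate hs] at hus
    exact hmem u hus
  have hk := key l hl (List.replicate n T).flatten hmem' (omegaPow T.flatten)
  rw [foldr_replicate] at hk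
  exact leUpTo_mono (by rw [length_replicate_flatten]; exact Nat.le_mul_of_pos_right n hlen) hk


/-- F3: for `p` a nonempty proper prefix of a Lyndon word `l`, the word `p^ω` drops
strictly below `l` at some position `j` with `|p| ≤ j < |l|`. -/
lemma lyndon_proper_prefix (l p : List A) (hl : IsLyndon l) (hp : p ≠ []) (hpre : p <+: l)
    (hne : p ≠ l) :
    ∃ j, p.length ≤ j ∧ j < l.length ∧ (∀ i < j, omegaPow p i = l.getD i default) ∧
      omegaPow p j < l.getD j default := by
  classical
  have hq0 : 0 < p.length := List.length_pos_iff.2 hp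
  have hqL : p.length < l.length :=
    lt_of_le_of_ne hpre.length_le (fun h => hne (List.IsPrefix.eq_of_length hpre h))
  have hagree0 : ∀ i < p.length, p.getD i default = l.getD i default := by
    intro i hi
    rw [List.getD_eq_getElem _ _ hi, List.getD_eq_getElem _ _ (by omega : i < l.length)]
    exact hpre.getElem hi
  have homega : ∀ i < p.length, omegaPow p i = p.getD i default := fun i hi => omega_lt hi
  have hperiod : ∀ a i, omegaPow p (p.length * a + i) = omegaPow p i := by
    intro a i
    simp only [omegaPow]
    congr 1
    exact Nat.mul_add_mod _ _ _
  by_cases hall : ∀ i < l.length, omegaPow p i = l.getD i default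
  · exfalso
    set v := l.drop p.length with hv
    have hvlen : v.length = l.length - p.length := List.length_drop
    have hvget : ∀ i (h : i < v.length), v.getD i default = l.getD (p.length + i) default := by
      intro i h
      rw [List.getD_eq_getElem _ _ h,
        List.getD_eq_getElem _ _ (by omega : p.length + i < l.length)]
      exact List.getElem_drop
    have hvne : v ≠ [] := by
      intro h; rw [h] at hvlen; simp at hvlen; omega
    have hvnel : v ≠ l := by
      intro h; rw [h] at hvlen; omega
    have hlex := hl.2 v (List.drop_suffix _ l) hvne hvnel
    rcases (lex_iff l v).1 hlex with ⟨hpre', _⟩ | ⟨j, hj1, hj2, ag, lt⟩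
    · have := hpre'.length_le; omega
    · have h1 : v.getD j default = l.getD j default := by
        rw [hvget j hj2, ← hall _ (by omega : p.length + j < l.length),
          show p.length + j = p.length * 1 + j by ring, hperiod, hall _ (by omega : j < l.length)]
      rw [h1] at lt
      exact lt_irrefl _ lt
  · push_neg at hall
    have hex : ∃ i, i < l.length ∧ omegaPow p i ≠ l.getD i default := hall
    obtain ⟨hjL, hjne⟩ := Nat.find_spec hex
    set j := Nat.find hex with hj
    have hmin : ∀ i < j, omegaPow p i = l.getD i default := by
      intro i hi
      by_contra hc
      have h2 : Nat.find hex ≤ i := Nat.find_le ⟨by omega, hc⟩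
      omega
    have hqj : p.length ≤ j := by
      by_contra h
      push_neg at h
      exact hjne ((homega j h).trans (hagree0 j h))
    rcases lt_trichotomy (omegaPow p j) (l.getD j default) with hlt | heq | hgt
    · exact ⟨j, hqj, hjL, hmin, hlt⟩
    · exact absurd heq hjne
    · exfalso
      set a := j / p.length with ha
      set r := j % p.length with hrdef
      have hb : p.length * a + r = j := Nat.div_add_mod j p.length
      have ha1 : 1 ≤ a := by
        rw [ha]
        exact (Nat.le_div_iff_mul_le hq0).2 (by omega)
      have hrq : r < p.length := Nat.mod_lt _ hq0
      have hbpos : 0 < p.length * a := by positivity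
      have hrj : r < j := by omega
      set w := l.drop (p.length * a) with hw
      have hwlen : w.length = l.length - p.length * a := List.length_drop
      have hwget : ∀ i (h : i < w.length), w.getD i default = l.getD (p.length * a + i) default := by
        intro i h
        rw [List.getD_eq_getElem _ _ h,
          List.getD_eq_getElem _ _ (by omega : p.length * a + i < l.length)]
        exact List.getElem_drop
      have hrw : r < w.length := by omega
      have hwr_lt : w.getD r default < l.getD r default := by
        rw [hwget r hrw, hb]
        calc l.getD j default < omegaPow p j := hgt
          _ = omegaPow p r := by rw [← hb, hperiod]
          _ = l.getD r default := hmin r hrj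
      have hwag : ∀ i < r, w.getD i default = l.getD i default := by
        intro i hi
        rw [hwget i (by omega), ← hmin (p.length * a + i) (by omega), hperiod,
          hmin i (by omega)]
      have hwne : w ≠ [] := by
        intro h; rw [h] at hwlen; simp at hwlen; omega
      have hwnel : w ≠ l := by
        intro h; rw [h] at hwlen; omega
      have hlex := hl.2 w (List.drop_suffix _ l) hwne hwnel
      rcases (lex_iff l w).1 hlex with ⟨hpre', _⟩ | ⟨j', hj1', hj2', ag', lt'⟩
      · have := hpre'.length_le; omega
      · rcases lt_trichotomy j' r with h | h | h
        · rw [hwag j' h] at lt'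
          exact lt_irrefl _ lt'
        · subst h
          exact absurd hwr_lt (lt_asymm lt')
        · exact absurd (ag' r h).symm (ne_of_lt hwr_lt)

/-- Part 2 main lemma. -/
lemma part2lem (l w : List A) (hl : IsLyndon l) (hw : l <+: w)
    (p s : List A) (hps : w = p ++ s) (hp : p ≠ []) (hlen : p.length < l.length) :
    s ≠ [] ∧ lexLt (omegaPow p) (omegaPow s) := by
  have hppre : p <+: l :=
    List.prefix_of_prefix_length_le ⟨s, hps.symm⟩ hw (le_of_lt hlen)
  obtain ⟨j, hqj, hjL, hag, hlt⟩ := lyndon_proper_prefix l p hl hp hppre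
    (by intro h; rw [h] at hlen; omega)
  have hwlen : l.length ≤ w.length := hw.length_le
  have hwslen : w.length = p.length + s.length := by rw [hps]; simp
  have hsne : s ≠ [] := by
    intro h
    rw [h] at hwslen
    simp at hwslen
    omega
  have hperiod : ∀ i, omegaPow p (p.length + i) = omegaPow p i := by
    intro i
    simp [omegaPow, Nat.add_mod_left]
  have hwl : ∀ i < l.length, w.getD i default = l.getD i default := by
    obtain ⟨rest, hrest⟩ := hw
    intro i hi
    rw [← hrest, List.getD_append _ _ _ _ hi]
  have hws : ∀ i < s.length, w.getD (p.length + i) default = s.getD i default := by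
    intro i hi
    rw [hps, List.getD_append_right _ _ _ _ (by omega)]
    congr 1
    omega
  refine ⟨hsne, j - p.length, ?_, ?_⟩
  · intro i hik
    have h1 : p.length + i < j := by omega
    have h2 : i < s.length := by omega
    calc omegaPow p i = omegaPow p (p.length + i) := (hperiod i).symm
      _ = l.getD (p.length + i) default := hag _ h1
      _ = w.getD (p.length + i) default := (hwl _ (by omega)).symm
      _ = s.getD i default := hws i h2
      _ = omegaPow s i := (omega_lt h2).symm
  · have hk : p.length + (j - p.length) = j := by omega
    have h2 : j - p.length < s.length := by omega
    calc omegaPow p (j - p.length) = omegaPow p (p.length + (j - p.length)) :=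
        (hperiod _).symm
      _ = omegaPow p j := by rw [hk]
      _ < l.getD j default := hlt
      _ = w.getD j default := (hwl _ hjL).symm
      _ = w.getD (p.length + (j - p.length)) default := by rw [hk]
      _ = s.getD (j - p.length) default := hws _ h2
      _ = omegaPow s (j - p.length) := (omega_lt h2).symm

end LyndonAux

open LyndonAux

/-- If `w = ℓ₁ℓ₂⋯ℓₙ` is the nonincreasing factorization of `w` into Lyndon words,
then `ℓ₁` is the shortest nonempty prefix `p` of `w` such that, writing `w = ps`,
either `s` is empty or `p^ω ≥ s^ω`. -/
theorem first_lyndon_factor_shortest_dominating_prefix (L : List (List A)) (hL : L ≠ [])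
    (hLyn : ∀ l ∈ L, IsLyndon l)
    (hchain : ∀ i : ℕ, (h : i + 1 < L.length) →
      List.Lex (· < ·) (L[i + 1]'h) (L[i]'(by omega)) ∨ (L[i + 1]'h) = (L[i]'(by omega))) :
    (∀ s : List A, L.flatten = L.headI ++ s →
      s = [] ∨ lexLe (omegaPow s) (omegaPow L.headI)) ∧
    (∀ p s : List A, L.flatten = p ++ s → p ≠ [] → p.length < L.headI.length →
      s ≠ [] ∧ lexLt (omegaPow p) (omegaPow s)) := by
  obtain ⟨a, T, rfl⟩ : ∃ a T, L = a :: T := by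
    cases L with
    | nil => exact absurd rfl hL
    | cons a T => exact ⟨a, T, rfl⟩
  have hhead : (a :: T).headI = a := rfl
  have hLa : IsLyndon a := hLyn a (List.mem_cons_self)
  -- every entry is ≤ the head
  have hidx : ∀ i (h : i < (a :: T).length),
      List.Lex (·<·) ((a :: T)[i]'h) a ∨ (a :: T)[i]'h = a := by
    intro i
    induction i with
    | zero => intro h; exact Or.inr rfl
    | succ i ih =>
      intro h
      have h1 := hchain i h
      have h2 := ih (by omega)
      rcases h1 with h1 | h1
      · rcases h2 with h2 | h2
        · exact Or.inl (List.lex_trans lt_trans h1 h2)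
        · rw [h2] at h1
          exact Or.inl h1
      · rw [h1]
        exact h2
  have hmemT : ∀ u ∈ T, List.Lex (·<·) u a ∨ u = a := by
    intro u hu
    obtain ⟨i, hi, hiu⟩ := List.getElem_of_mem hu
    have h := hidx (i + 1) (by simpa using Nat.succ_lt_succ hi)
    rwa [List.getElem_cons_succ, hiu] at h
  constructor
  · intro s hs
    rw [hhead] at hs ⊢
    rw [List.flatten_cons] at hs
    have hTs : T.flatten = s := by
      exact List.append_cancel_left hs
    by_cases hse : s = []
    · exact Or.inl hse
    · exact Or.inr (hTs ▸ part1 a hLa T hmemT (hTs ▸ hse))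
  · intro p s hps hp hlen
    rw [hhead] at hlen
    exact part2lem a (a :: T).flatten hLa
      (by rw [List.flatten_cons]; exact List.prefix_append a T.flatten) p s hps hp hlen
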